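/- arXiv:math/0406050 — 2 statements merged into one kernel-verified Lean document; each statement's English description precedes it below -/
import Mathlib

section
/- Let n ≥ 3, 0 < δ ≤ 1, x₀ ∈ ℝⁿ, and let e ⊂ B_δ(x₀) be a compact set. Then cap(e, B_{2δ}(x₀)) ≤ c(n)·cap(e), where cap(e) = inf{ ∫(|∇u|² + |u|²) dx : u ∈ C₀^∞(ℝⁿ), u > 1 on e } is the Bessel capacity and cap(e, B_{2δ}(x₀)) is the Wiener capacity relative to B_{2δ}(x₀), and c(n) depends only on n. -/
open MeasureTheory Metric Set ENNReal
open scoped NNReal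

noncomputable section

abbrev Eu (n : ℕ) := EuclideanSpace ℝ (Fin n)

/-- Smooth compactly supported test function with support in `Ω`. -/
def TestIn (n : ℕ) (Ω : Set (Eu n)) (u : Eu n → ℝ) : Prop :=
  ContDiff ℝ (⊤ : ℕ∞) u ∧ HasCompactSupport u ∧ tsupport u ⊆ Ω

/-- Wiener capacity of `e` relative to the domain `Ω`:
`cap(e,Ω) = inf { ∫_Ω |∇u|² : u ∈ C₀^∞(Ω), u > 1 on e }`. -/
def wienerCap (n : ℕ) (Ω e : Set (Eu n)) : ℝ≥0∞ :=
  sInf {c | ∃ u : Eu n → ℝ, TestIn n Ω u ∧ (∀ x ∈ e, 1 < u x) ∧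
    c = ∫⁻ x, (‖fderiv ℝ u x‖₊ : ℝ≥0∞) ^ 2}

/-- Bessel capacity associated with `W^{1,2}(ℝⁿ)`:
`cap(e) = inf { ∫ (|∇u|² + |u|²) : u ∈ C₀^∞(ℝⁿ), u > 1 on e }`. -/
def besselCap (n : ℕ) (e : Set (Eu n)) : ℝ≥0∞ :=
  sInf {c | ∃ u : Eu n → ℝ, ContDiff ℝ (⊤ : ℕ∞) u ∧ HasCompactSupport u ∧
    (∀ x ∈ e, 1 < u x) ∧
    c = ∫⁻ x, ((‖fderiv ℝ u x‖₊ : ℝ≥0∞) ^ 2 + (‖u x‖₊ : ℝ≥0∞) ^ 2)}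

/-!
Given `u` admissible for the Bessel capacity of `e ⊆ B_δ(x₀)`, the product `η u` with a cutoff `η`
equal to `1` on `B_δ(x₀)`, supported in `B_{2δ}(x₀)` and with `|∇η| ≤ M / δ` is admissible for the
Wiener capacity, and `‖∇(η u)‖₂ ≤ ‖∇u‖₂ + (M / δ) ‖u‖_{L²(B_{2δ})}`. For `n ≥ 3` the
Gagliardo–Nirenberg–Sobolev inequality followed by Hölder's inequality on the ball gives
`‖u‖_{L²(B_r)} ≤ C r ‖∇u‖₂` (this replaces Hardy's inequality), so the factor `1 / δ` cancels and
`cap(e, B_{2δ}) ≤ (1 + 2 M C)² cap(e)`.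
-/

open Module

theorem lintegral_nnnorm_sq_eq_eLpNorm_sq {α F : Type*} [MeasurableSpace α]
    [NormedAddCommGroup F] (f : α → F) (μ : Measure α) :
    ∫⁻ x, (‖f x‖₊ : ℝ≥0∞) ^ 2 ∂μ = eLpNorm f 2 μ ^ 2 := by
  have h := eLpNorm_nnreal_pow_eq_lintegral (f := f) (μ := μ) (p := 2) two_ne_zero
  simp only [NNReal.coe_ofNat, ENNReal.rpow_two, enorm_eq_nnnorm] at h
  exact h.symm

section Poincare

variable {E F : Type*} [NormedAddCommGroup E] [NormedSpace ℝ E] [FiniteDimensional ℝ E]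
  [MeasurableSpace E] [BorelSpace E] (μ : Measure E) [μ.IsAddHaarMeasure]
  [NormedAddCommGroup F] [NormedSpace ℝ F] [FiniteDimensional ℝ F]

theorem exists_eLpNorm_restrict_closedBall_le_mul_eLpNorm_fderiv {p : ℝ≥0} (hp : 1 ≤ p)
    (hpE : p < finrank ℝ E) :
    ∃ C : ℝ≥0, ∀ (x : E) (r : ℝ≥0) {u : E → F}, ContDiff ℝ 1 u → HasCompactSupport u →
      eLpNorm u p (μ.restrict (closedBall x r)) ≤ C * r * eLpNorm (fderiv ℝ u) p μ := by
  set n := finrank ℝ E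
  have hn : n ≠ 0 := by rintro h; simp [n, h] at hpE
  have hp0 : (0 : ℝ) < p := zero_lt_one.trans_le (by exact_mod_cast hp)
  have hpn : (n : ℝ)⁻¹ < (p : ℝ)⁻¹ := by gcongr; exact_mod_cast hpE
  -- the Sobolev exponent of `p`
  obtain ⟨q, hq⟩ : ∃ q : ℝ≥0, (q : ℝ)⁻¹ = (p : ℝ)⁻¹ - (n : ℝ)⁻¹ :=
    ⟨⟨_, (inv_pos.2 (sub_pos.2 hpn)).le⟩, inv_inv _⟩
  have hpq : (p : ℝ≥0∞) ≤ q := by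
    rw [ENNReal.coe_le_coe, ← NNReal.coe_le_coe]
    refine (inv_le_inv₀ (inv_pos.1 (hq ▸ sub_pos.2 hpn)) hp0).1 ?_
    rw [hq]
    have : (0 : ℝ) ≤ (n : ℝ)⁻¹ := by positivity
    linarith
  set V := μ (ball 0 1)
  have hV : V ^ (n⁻¹ : ℝ) ≠ ∞ :=
    ENNReal.rpow_ne_top_of_nonneg (by positivity) measure_ball_lt_top.ne
  refine ⟨SNormLESNormFDerivOfEqConst F μ p * (V ^ (n⁻¹ : ℝ)).toNNReal, fun x r u hu hcs => ?_⟩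
  have hvol : μ (closedBall x r) ^ (1 / (p : ℝ≥0∞).toReal - 1 / (q : ℝ≥0∞).toReal)
      = r * V ^ (n⁻¹ : ℝ) := by
    rw [Measure.addHaar_closedBall μ x r.coe_nonneg, ENNReal.ofReal_pow r.coe_nonneg,
      ofReal_coe_nnreal, ENNReal.coe_toReal, ENNReal.coe_toReal, one_div, one_div, hq,
      _root_.sub_sub_cancel, ENNReal.mul_rpow_of_nonneg _ _ (by positivity),
      ENNReal.pow_rpow_inv_natCast hn]
  calc eLpNorm u p (μ.restrict (closedBall x r))
      ≤ eLpNorm u q (μ.restrict (closedBall x r)) * μ (closedBall x r) ^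
          (1 / (p : ℝ≥0∞).toReal - 1 / (q : ℝ≥0∞).toReal) := by
        rw [← Measure.restrict_apply_univ]
        exact eLpNorm_le_eLpNorm_mul_rpow_measure_univ hpq hu.continuous.aestronglyMeasurable
    _ ≤ SNormLESNormFDerivOfEqConst F μ p * eLpNorm (fderiv ℝ u) p μ * (r * V ^ (n⁻¹ : ℝ)) := by
        rw [hvol]
        gcongr
        exact (eLpNorm_mono_measure u Measure.restrict_le_self).trans
          (eLpNorm_le_eLpNorm_fderiv_of_eq μ hu hcs hp (Nat.pos_of_ne_zero hn) hq)
    _ = _ := by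
        rw [ENNReal.coe_mul, ENNReal.coe_toNNReal hV]
        ring

end Poincare

section Cutoff

variable {E F : Type*} [NormedAddCommGroup E] [NormedSpace ℝ E] [NormedAddCommGroup F]
  [NormedSpace ℝ F]

theorem exists_contDiff_cutoff_ball [FiniteDimensional ℝ E] :
    ∃ M : ℝ≥0, ∀ (x : E) (δ : ℝ≥0), 0 < δ → ∃ η : E → ℝ, ContDiff ℝ (⊤ : ℕ∞) η ∧
      tsupport η ⊆ ball x (2 * δ) ∧ EqOn η 1 (closedBall x δ) ∧ (∀ y, ‖η y‖ ≤ 1) ∧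
      ∀ y, ‖fderiv ℝ η y‖₊ ≤ M / δ := by
  let B : ContDiffBump (0 : E) := ⟨1, 3 / 2, one_pos, by norm_num⟩
  obtain ⟨M, hM⟩ := (B.hasCompactSupport.fderiv (𝕜 := ℝ)).exists_bound_of_continuous
    (B.contDiff.continuous_fderiv (n := 1) one_ne_zero)
  refine ⟨M.toNNReal, fun x δ hδ0 => ?_⟩
  have hδ : (0 : ℝ) < δ := hδ0
  have hscale (y : E) : ‖(δ : ℝ)⁻¹ • (y - x)‖ = (δ : ℝ)⁻¹ * dist y x := by
    rw [norm_smul, norm_inv, Real.norm_of_nonneg hδ.le, dist_eq_norm]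
  refine ⟨fun y => B ((δ : ℝ)⁻¹ • (y - x)), ?_, ?_, ?_, ?_, ?_⟩
  · exact B.contDiff.comp ((contDiff_id.sub contDiff_const).const_smul _)
  · have hsupp : Function.support (fun y => B ((δ : ℝ)⁻¹ • (y - x)))
        ⊆ closedBall x (3 / 2 * δ) := by
      intro y hy
      have : (δ : ℝ)⁻¹ • (y - x) ∈ ball (0 : E) (3 / 2) := B.support_eq ▸ hy
      rw [mem_ball_zero_iff, hscale, inv_mul_lt_iff₀ hδ] at this
      exact mem_closedBall.2 (by linarith)
    exact (closure_minimal hsupp isClosed_closedBall).trans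
      (closedBall_subset_ball (by linarith))
  · intro y hy
    refine B.one_of_mem_closedBall ?_
    rw [mem_closedBall_zero_iff, hscale, inv_mul_le_iff₀ hδ, mul_one]
    exact hy
  · intro y
    rw [Real.norm_of_nonneg B.nonneg]
    exact B.le_one
  · intro y
    rw [← NNReal.coe_le_coe, coe_nnnorm, fderiv_comp_sub (f := fun z => B ((δ : ℝ)⁻¹ • z)),
      fderiv_comp_smul, norm_smul, norm_inv, Real.norm_of_nonneg hδ.le, NNReal.coe_div,
      div_eq_inv_mul]
    gcongr
    exact (hM _).trans (Real.le_coe_toNNReal M)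

theorem norm_fderiv_smul_le_indicator {η : E → ℝ} {u : E → F} (hη : Differentiable ℝ η)
    (hu : Differentiable ℝ u) {s : Set E} (hηs : tsupport η ⊆ s) (hη_le : ∀ x, ‖η x‖ ≤ 1)
    {L : ℝ≥0} (hηL : ∀ x, ‖fderiv ℝ η x‖₊ ≤ L) (x : E) :
    ‖fderiv ℝ (fun y => η y • u y) x‖ ≤ ‖fderiv ℝ u x‖ + ‖s.indicator ((L : ℝ) • u) x‖ := by
  by_cases hx : x ∈ s
  · rw [fderiv_fun_smul (hη x) (hu x), indicator_of_mem hx, Pi.smul_apply, norm_smul (L : ℝ),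
      NNReal.norm_eq]
    refine (norm_add_le _ _).trans (add_le_add ?_ ?_)
    · rw [norm_smul]
      exact mul_le_of_le_one_left (norm_nonneg _) (hη_le x)
    · rw [ContinuousLinearMap.norm_smulRight_apply]
      exact mul_le_mul_of_nonneg_right (hηL x) (norm_nonneg _)
  · have : fderiv ℝ (fun y => η y • u y) x = 0 :=
      Function.notMem_support.1 fun h => hx (hηs (tsupport_smul_subset_left _ _
        (support_fderiv_subset ℝ h)))
    rw [this, norm_zero]
    positivity

theorem eLpNorm_fderiv_smul_le [FiniteDimensional ℝ E] [MeasurableSpace E] [BorelSpace E]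
    {η : E → ℝ} {u : E → F} (hη : ContDiff ℝ 1 η) (hu : ContDiff ℝ 1 u)
    {s : Set E} (hs : MeasurableSet s) (hηs : tsupport η ⊆ s) (hη_le : ∀ x, ‖η x‖ ≤ 1)
    {L : ℝ≥0} (hηL : ∀ x, ‖fderiv ℝ η x‖₊ ≤ L) {p : ℝ≥0∞} (hp : 1 ≤ p) (μ : Measure E) :
    eLpNorm (fderiv ℝ (fun y => η y • u y)) p μ
      ≤ eLpNorm (fderiv ℝ u) p μ + L * eLpNorm u p (μ.restrict s) := by
  have hDu := (hu.continuous_fderiv one_ne_zero).aestronglyMeasurable (μ := μ)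
  have hLu : AEStronglyMeasurable (s.indicator ((L : ℝ) • u)) μ :=
    (hu.continuous.aestronglyMeasurable.const_smul (L : ℝ)).indicator hs
  calc eLpNorm (fderiv ℝ (fun y => η y • u y)) p μ
      ≤ eLpNorm (fun x => ‖fderiv ℝ u x‖ + ‖s.indicator ((L : ℝ) • u) x‖) p μ :=
        eLpNorm_mono_real (norm_fderiv_smul_le_indicator (hη.differentiable one_ne_zero)
          (hu.differentiable one_ne_zero) hηs hη_le hηL)
    _ ≤ eLpNorm (fun x => ‖fderiv ℝ u x‖) p μ
          + eLpNorm (fun x => ‖s.indicator ((L : ℝ) • u) x‖) p μ :=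
        eLpNorm_add_le hDu.norm hLu.norm hp
    _ = eLpNorm (fderiv ℝ u) p μ + L * eLpNorm u p (μ.restrict s) := by
        rw [eLpNorm_norm, eLpNorm_norm, eLpNorm_indicator_eq_eLpNorm_restrict hs,
          eLpNorm_const_smul, NNReal.enorm_eq]

end Cutoff

theorem wienerCap_le_sq_mul_besselCap {n : ℕ} {Ω e : Set (Eu n)} {K : ℝ≥0} (hK : K ≠ 0)
    (h : ∀ u : Eu n → ℝ, ContDiff ℝ (⊤ : ℕ∞) u → HasCompactSupport u → (∀ x ∈ e, 1 < u x) →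
      ∃ v, TestIn n Ω v ∧ (∀ x ∈ e, 1 < v x) ∧
        eLpNorm (fderiv ℝ v) 2 volume ≤ K * eLpNorm (fderiv ℝ u) 2 volume) :
    wienerCap n Ω e ≤ (K ^ 2 : ℝ≥0) * besselCap n e := by
  have hK2 : ((K ^ 2 : ℝ≥0) : ℝ≥0∞) ≠ 0 := by simpa using hK
  rw [← ENNReal.div_le_iff' hK2 coe_ne_top]
  refine le_sInf ?_
  rintro _ ⟨u, hu, hcs, hue, rfl⟩
  obtain ⟨v, hv, hve, hvu⟩ := h u hu hcs hue
  rw [ENNReal.div_le_iff' hK2 coe_ne_top]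
  calc wienerCap n Ω e ≤ ∫⁻ x, (‖fderiv ℝ v x‖₊ : ℝ≥0∞) ^ 2 := sInf_le ⟨v, hv, hve, rfl⟩
    _ = eLpNorm (fderiv ℝ v) 2 volume ^ 2 := lintegral_nnnorm_sq_eq_eLpNorm_sq _ _
    _ ≤ (K * eLpNorm (fderiv ℝ u) 2 volume) ^ 2 := by gcongr
    _ = (K ^ 2 : ℝ≥0) * ∫⁻ x, (‖fderiv ℝ u x‖₊ : ℝ≥0∞) ^ 2 := by
        rw [lintegral_nnnorm_sq_eq_eLpNorm_sq, mul_pow, coe_pow]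
    _ ≤ (K ^ 2 : ℝ≥0) * ∫⁻ x, ((‖fderiv ℝ u x‖₊ : ℝ≥0∞) ^ 2 + (‖u x‖₊ : ℝ≥0∞) ^ 2) := by
        gcongr with x
        exact le_self_add

theorem stmt9 (n : ℕ) (hn : 3 ≤ n) :
    ∃ c : ℝ≥0, 0 < c ∧ ∀ δ : ℝ, 0 < δ → δ ≤ 1 → ∀ (x₀ : Eu n) (e : Set (Eu n)),
      IsCompact e → e ⊆ ball x₀ δ →
      wienerCap n (ball x₀ (2 * δ)) e ≤ (c : ℝ≥0∞) * besselCap n e := by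
  obtain ⟨C, hC⟩ := exists_eLpNorm_restrict_closedBall_le_mul_eLpNorm_fderiv (F := ℝ) volume
    (p := 2) one_le_two (by rw [finrank_euclideanSpace_fin]; exact_mod_cast hn)
  obtain ⟨M, hM⟩ := exists_contDiff_cutoff_ball (E := Eu n)
  refine ⟨(1 + 2 * M * C) ^ 2, by positivity, fun δ hδ _ x₀ e _ he => ?_⟩
  lift δ to ℝ≥0 using hδ.le
  refine wienerCap_le_sq_mul_besselCap (by positivity) fun u hu hcs hue => ?_
  obtain ⟨η, hη, hηs, hη_one, hη_le, hηM⟩ := hM x₀ δ (NNReal.coe_pos.1 hδ)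
  refine ⟨fun x => η x • u x, ⟨hη.smul hu, hcs.smul_left (f := η),
    (tsupport_smul_subset_left _ _).trans hηs⟩, fun x hx => ?_, ?_⟩
  · simpa [hη_one (ball_subset_closedBall (he hx))] using hue x hx
  have hu1 : ContDiff ℝ 1 u := hu.of_le (mod_cast le_top)
  calc eLpNorm (fderiv ℝ fun x => η x • u x) 2 volume
      ≤ eLpNorm (fderiv ℝ u) 2 volume
          + (M / δ : ℝ≥0) * eLpNorm u 2 (volume.restrict (closedBall x₀ (2 * δ : ℝ≥0))) :=
        eLpNorm_fderiv_smul_le (hη.of_le (mod_cast le_top)) hu1 measurableSet_closedBall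
          (by exact_mod_cast hηs.trans ball_subset_closedBall) hη_le hηM one_le_two volume
    _ ≤ eLpNorm (fderiv ℝ u) 2 volume
          + (M / δ : ℝ≥0) * (C * (2 * δ : ℝ≥0) * eLpNorm (fderiv ℝ u) 2 volume) := by
        gcongr
        exact hC x₀ _ hu1 hcs
    _ = (1 + 2 * M * C : ℝ≥0) * eLpNorm (fderiv ℝ u) 2 volume := by
        have hMC : M / δ * (C * (2 * δ)) = 2 * M * C := by
          field_simp [(NNReal.coe_pos.1 hδ).ne']
        rw [← mul_assoc, ← coe_mul, ← coe_mul, hMC, coe_add, coe_one, add_mul, one_mul]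
end
end

section
/- Let n = 2 and 1 ≤ 2τ < ∞. Let μ be a nonnegative measure supported on a compact set e ⊂ B_δ(x₀) with 0 < δ ≤ 1, and P = G₂⋆μ. Then ∫_{B_{2δ}(x₀)} P^{2τ} dx ≤ c(τ)·δ²·log^{2τ}(2/δ)·μ(e)^{2τ}. -/
open MeasureTheory Metric Set ENNReal
open scoped NNReal

noncomputable section

/-- The Bessel kernel `G_α` on `ℝⁿ`, given by its subordination (heat kernel) formula. -/
def besselKernel (n : ℕ) (α : ℝ) (x : Eu n) : ℝ :=
  (1 / ((4 * Real.pi) ^ (α / 2) * Real.Gamma (α / 2))) *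
    ∫ t in Set.Ioi (0 : ℝ),
      Real.exp (-(Real.pi * ‖x‖ ^ 2) / t) * Real.exp (-t / (4 * Real.pi)) *
        t ^ ((α - n) / 2 - 1)

/-- The Bessel potential `P = G₂ ⋆ μ` of a measure `μ` on `ℝ²`, with values in `[0,∞]`. -/
def besselPot2 (μ : Measure (Eu 2)) (x : Eu 2) : ℝ≥0∞ :=
  ∫⁻ y, ENNReal.ofReal (besselKernel 2 2 (x - y)) ∂μ

/-!
Splitting the subordination integral
`G₂(z) = (4π)⁻¹ ∫₀^∞ exp (-π|z|²/t) exp (-t/(4π)) dt/t` at `t = π|z|²` and `t = 1` gives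
`G₂(z) ≤ 2 + 2 log⁺ (1/|z|)`. By Hölder and Tonelli, with `p = 2τ`,
`∫_B P^p ≤ μ(e)^(p-1) ∫ (∫_B G₂(x - y)^p dx) dμ(y)`, so it suffices to bound the inner integral
uniformly in `y ∈ B_δ(x₀)`. Translating by `y` puts it inside `B_{3δ}(0)`, and rescaling by `δ`
together with `2 + 2 log⁺ (1/(δr)) ≤ (log (2/δ) / log 2) (2 + 2 log⁺ (1/r))` bounds it by
`δ² (log (2/δ) / log 2)^p` times the finite integral of `(2 + 2 log⁺ (1/|w|))^p` over `B_3(0)`.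
-/

open scoped Real

section Subordination

def subordinationIntegrand (a c t : ℝ) : ℝ :=
  Real.exp (-a / t) * Real.exp (-t / c) * t ^ (-1 : ℝ)

variable {a c t : ℝ}

lemma measurable_subordinationIntegrand (a c : ℝ) : Measurable (subordinationIntegrand a c) := by
  unfold subordinationIntegrand; fun_prop

lemma exp_neg_div_le_one (ha : 0 ≤ a) (ht : 0 ≤ t) : Real.exp (-a / t) ≤ 1 :=
  Real.exp_le_one_iff.mpr (div_nonpos_of_nonpos_of_nonneg (neg_nonpos.mpr ha) ht)

lemma subordinationIntegrand_nonneg (ht : 0 ≤ t) : 0 ≤ subordinationIntegrand a c t := by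
  unfold subordinationIntegrand; positivity

lemma subordinationIntegrand_le_inv (ha : 0 ≤ a) (hc : 0 ≤ c) (ht : 0 < t) :
    subordinationIntegrand a c t ≤ t⁻¹ := by
  rw [subordinationIntegrand, Real.rpow_neg_one]
  calc Real.exp (-a / t) * Real.exp (-t / c) * t⁻¹ ≤ 1 * 1 * t⁻¹ := by
        gcongr
        exacts [exp_neg_div_le_one ha ht.le, exp_neg_div_le_one ht.le hc]
    _ = t⁻¹ := by ring

lemma subordinationIntegrand_le_inv_param (ha : 0 < a) (hc : 0 ≤ c) (ht : 0 < t) :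
    subordinationIntegrand a c t ≤ a⁻¹ := by
  have hexp : Real.exp (-a / t) ≤ t / a := by
    rw [neg_div, Real.exp_neg, inv_le_comm₀ (Real.exp_pos _) (by positivity), inv_div]
    linarith [Real.add_one_le_exp (a / t)]
  rw [subordinationIntegrand, Real.rpow_neg_one]
  calc Real.exp (-a / t) * Real.exp (-t / c) * t⁻¹ ≤ t / a * 1 * t⁻¹ := by
        gcongr
        exact exp_neg_div_le_one ht.le hc
    _ = a⁻¹ := by field_simp

lemma subordinationIntegrand_le_exp (ha : 0 ≤ a) (ht : 1 ≤ t) :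
    subordinationIntegrand a c t ≤ Real.exp (-t / c) := by
  rw [subordinationIntegrand, Real.rpow_neg_one]
  calc Real.exp (-a / t) * Real.exp (-t / c) * t⁻¹ ≤ 1 * Real.exp (-t / c) * 1 := by
        gcongr
        exacts [exp_neg_div_le_one ha (by linarith), inv_le_one_of_one_le₀ ht]
    _ = Real.exp (-t / c) := by ring

lemma lintegral_Ioc_inv_le_posLog_inv (ha : 0 < a) :
    ∫⁻ t in Ioc a 1, ENNReal.ofReal t⁻¹ ≤ ENNReal.ofReal (log⁺ a⁻¹) := by
  rcases le_total 1 a with h | h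
  · simp [Ioc_eq_empty_of_le h]
  have hint : IntegrableOn (fun t : ℝ => t⁻¹) (Ioc a 1) :=
    (intervalIntegral.intervalIntegrable_inv (fun t ht => by
      rw [uIcc_of_le h] at ht; exact (ha.trans_le ht.1).ne') continuousOn_id).1
  have hnonneg : ∀ᵐ t ∂volume.restrict (Ioc a 1), 0 ≤ t⁻¹ :=
    (ae_restrict_iff' measurableSet_Ioc).mpr
      (.of_forall fun t ht => inv_nonneg.mpr (ha.trans ht.1).le)
  rw [← ofReal_integral_eq_lintegral_ofReal hint hnonneg, ← intervalIntegral.integral_of_le h,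
    integral_inv_of_pos ha one_pos, one_div]
  exact ENNReal.ofReal_le_ofReal (le_max_right _ _)

lemma lintegral_Ioi_exp_neg_div (hc : 0 < c) :
    ∫⁻ t in Ioi 0, ENNReal.ofReal (Real.exp (-t / c)) = ENNReal.ofReal c := by
  have hneg : -c⁻¹ < 0 := neg_neg_of_pos (inv_pos.mpr hc)
  have heq : ∀ t : ℝ, -t / c = -c⁻¹ * t := fun t => by ring
  simp_rw [heq]
  rw [← ofReal_integral_eq_lintegral_ofReal (integrableOn_exp_mul_Ioi hneg 0)
    (.of_forall fun t => (Real.exp_pos _).le), integral_exp_mul_Ioi hneg 0]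
  simp

lemma lintegral_subordinationIntegrand_le (ha : 0 < a) (hc : 0 < c) :
    ∫⁻ t in Ioi 0, ENNReal.ofReal (subordinationIntegrand a c t) ≤
      ENNReal.ofReal (1 + log⁺ a⁻¹ + c) := by
  set f := subordinationIntegrand a c
  have hcover : Ioi 0 ⊆ Ioc 0 a ∪ Ioc a 1 ∪ Ioi 1 := by
    intro t (ht : 0 < t)
    by_cases hta : t ≤ a
    · exact Or.inl (Or.inl ⟨ht, hta⟩)
    by_cases ht1 : t ≤ 1
    · exact Or.inl (Or.inr ⟨not_le.mp hta, ht1⟩)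
    · exact Or.inr (not_le.mp ht1)
  have hf : Measurable fun t => ENNReal.ofReal (f t) :=
    (measurable_subordinationIntegrand a c).ennreal_ofReal
  have h₁ : ∫⁻ t in Ioc 0 a, ENNReal.ofReal (f t) ≤ 1 :=
    calc ∫⁻ t in Ioc 0 a, ENNReal.ofReal (f t) ≤ ∫⁻ _ in Ioc 0 a, ENNReal.ofReal a⁻¹ :=
          setLIntegral_mono measurable_const fun t ht =>
            ENNReal.ofReal_le_ofReal (subordinationIntegrand_le_inv_param ha hc.le ht.1)
      _ = 1 := by
        rw [setLIntegral_const, Real.volume_Ioc, sub_zero, ← ENNReal.ofReal_mul (by positivity),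
          inv_mul_cancel₀ ha.ne', ENNReal.ofReal_one]
  have h₂ : ∫⁻ t in Ioc a 1, ENNReal.ofReal (f t) ≤ ENNReal.ofReal (log⁺ a⁻¹) :=
    (setLIntegral_mono (by fun_prop) fun t ht => ENNReal.ofReal_le_ofReal
      (subordinationIntegrand_le_inv ha.le hc.le (ha.trans ht.1))).trans
      (lintegral_Ioc_inv_le_posLog_inv ha)
  have h₃ : ∫⁻ t in Ioi 1, ENNReal.ofReal (f t) ≤ ENNReal.ofReal c :=
    calc ∫⁻ t in Ioi 1, ENNReal.ofReal (f t)
        ≤ ∫⁻ t in Ioi 1, ENNReal.ofReal (Real.exp (-t / c)) :=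
          setLIntegral_mono (by fun_prop) fun t ht =>
            ENNReal.ofReal_le_ofReal (subordinationIntegrand_le_exp ha.le (le_of_lt ht))
      _ ≤ ∫⁻ t in Ioi 0, ENNReal.ofReal (Real.exp (-t / c)) :=
          lintegral_mono_set (Ioi_subset_Ioi zero_le_one)
      _ = ENNReal.ofReal c := lintegral_Ioi_exp_neg_div hc
  calc ∫⁻ t in Ioi 0, ENNReal.ofReal (f t)
      ≤ ∫⁻ t in Ioc 0 a ∪ Ioc a 1 ∪ Ioi 1, ENNReal.ofReal (f t) := lintegral_mono_set hcover
    _ ≤ (∫⁻ t in Ioc 0 a, ENNReal.ofReal (f t)) + (∫⁻ t in Ioc a 1, ENNReal.ofReal (f t)) +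
          ∫⁻ t in Ioi 1, ENNReal.ofReal (f t) :=
        (lintegral_union_le _ _ _).trans (add_le_add_left (lintegral_union_le _ _ _) _)
    _ ≤ 1 + ENNReal.ofReal (log⁺ a⁻¹) + ENNReal.ofReal c := by gcongr
    _ = ENNReal.ofReal (1 + log⁺ a⁻¹ + c) := by
        rw [ENNReal.ofReal_add (add_nonneg zero_le_one Real.posLog_nonneg) hc.le,
          ENNReal.ofReal_add zero_le_one Real.posLog_nonneg, ENNReal.ofReal_one]

end Subordination

def logMajorant (r : ℝ) : ℝ := 2 + 2 * log⁺ r⁻¹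

lemma logMajorant_nonneg (r : ℝ) : 0 ≤ logMajorant r := by
  unfold logMajorant; linarith [Real.posLog_nonneg (x := r⁻¹)]

lemma besselKernel_two_two_eq (z : Eu 2) :
    besselKernel 2 2 z =
      (4 * π)⁻¹ * ∫ t in Ioi 0, subordinationIntegrand (π * ‖z‖ ^ 2) (4 * π) t := by
  norm_num [besselKernel, subordinationIntegrand, Real.Gamma_one]

lemma besselKernel_two_two_le_logMajorant {z : Eu 2} (hz : z ≠ 0) :
    besselKernel 2 2 z ≤ logMajorant ‖z‖ := by
  set a := π * ‖z‖ ^ 2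
  have ha : 0 < a := by positivity
  have hposLog := Real.posLog_nonneg (x := a⁻¹)
  have hint : ∫ t in Ioi 0, subordinationIntegrand a (4 * π) t ≤ 1 + log⁺ a⁻¹ + 4 * π := by
    rw [integral_eq_lintegral_of_nonneg_ae
      ((ae_restrict_iff' measurableSet_Ioi).mpr (.of_forall fun t ht =>
        subordinationIntegrand_nonneg (le_of_lt ht)))
      (measurable_subordinationIntegrand a _).aestronglyMeasurable]
    exact ENNReal.toReal_le_of_le_ofReal (by linarith [Real.pi_pos])
      (lintegral_subordinationIntegrand_le ha (by positivity))
  have hlog : log⁺ a⁻¹ ≤ 2 * log⁺ ‖z‖⁻¹ :=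
    calc log⁺ a⁻¹ ≤ log⁺ (‖z‖⁻¹ ^ 2) := by
          refine Real.posLog_le_posLog (by positivity) ?_
          rw [mul_inv, inv_pow]
          exact mul_le_of_le_one_left (by positivity)
            (inv_le_one_of_one_le₀ (by linarith [Real.pi_gt_three]))
      _ = 2 * log⁺ ‖z‖⁻¹ := by rw [Real.posLog_pow]; norm_num
  have hπ : (4 * π)⁻¹ ≤ 1 := inv_le_one_of_one_le₀ (by linarith [Real.pi_gt_three])
  rw [besselKernel_two_two_eq, logMajorant]
  calc (4 * π)⁻¹ * ∫ t in Ioi 0, subordinationIntegrand a (4 * π) t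
      ≤ (4 * π)⁻¹ * (1 + log⁺ a⁻¹) + (4 * π)⁻¹ * (4 * π) := by
        rw [← mul_add]; gcongr
    _ ≤ 1 * (1 + log⁺ a⁻¹) + 1 := by
        rw [inv_mul_cancel₀ (by positivity)]; gcongr
    _ ≤ 2 + 2 * log⁺ ‖z‖⁻¹ := by linarith

lemma measurable_besselKernel (n : ℕ) (α : ℝ) : Measurable (besselKernel n α) := by
  have h : Measurable (Function.uncurry fun (x : Eu n) (t : ℝ) =>
      Real.exp (-(π * ‖x‖ ^ 2) / t) * Real.exp (-t / (4 * π)) * t ^ ((α - n) / 2 - 1)) := by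
    fun_prop
  exact (h.stronglyMeasurable.integral_prod_right'
    (ν := volume.restrict (Ioi 0))).measurable.const_mul _

section Holder

variable {α β : Type*} [MeasurableSpace α] [MeasurableSpace β] {p : ℝ}

lemma lintegral_rpow_le_measure_univ_rpow_mul (μ : Measure α) {f : α → ℝ≥0∞}
    (hf : AEMeasurable f μ) (hp : 1 ≤ p) :
    (∫⁻ x, f x ∂μ) ^ p ≤ μ univ ^ (p - 1) * ∫⁻ x, f x ^ p ∂μ := by
  rcases hp.eq_or_lt with rfl | hp
  · simp
  have hp0 : 0 < p := zero_lt_one.trans hp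
  have hpq : p.HolderConjugate (p / (p - 1)) := .conjExponent hp
  have holder := ENNReal.lintegral_mul_le_Lp_mul_Lq μ hpq hf aemeasurable_const (g := fun _ => 1)
  simp only [Pi.mul_apply, mul_one, ENNReal.one_rpow, lintegral_const, one_mul] at holder
  calc (∫⁻ x, f x ∂μ) ^ p
      ≤ ((∫⁻ x, f x ^ p ∂μ) ^ (1 / p) * μ univ ^ (1 / (p / (p - 1)))) ^ p := by gcongr
    _ = μ univ ^ (p - 1) * ∫⁻ x, f x ^ p ∂μ := by
        rw [ENNReal.mul_rpow_of_nonneg _ _ hp0.le, ← ENNReal.rpow_mul, ← ENNReal.rpow_mul,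
          one_div_mul_cancel hp0.ne', ENNReal.rpow_one, mul_comm]
        congr 2
        field_simp

lemma lintegral_rpow_lintegral_le {ν : Measure α} [SFinite ν] {μ : Measure β} [SFinite μ]
    {g : α → β → ℝ≥0∞} (hg : Measurable (Function.uncurry g)) (hp : 1 ≤ p) {B : ℝ≥0∞}
    (hB : ∀ᵐ y ∂μ, ∫⁻ x, g x y ^ p ∂ν ≤ B) :
    ∫⁻ x, (∫⁻ y, g x y ∂μ) ^ p ∂ν ≤ B * μ univ ^ p := by
  have hgp : Measurable (Function.uncurry fun x y => g x y ^ p) := hg.pow_const p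
  calc ∫⁻ x, (∫⁻ y, g x y ∂μ) ^ p ∂ν
      ≤ ∫⁻ x, μ univ ^ (p - 1) * ∫⁻ y, g x y ^ p ∂μ ∂ν :=
        lintegral_mono fun x => lintegral_rpow_le_measure_univ_rpow_mul μ
          hg.of_uncurry_left.aemeasurable hp
    _ = μ univ ^ (p - 1) * ∫⁻ y, ∫⁻ x, g x y ^ p ∂ν ∂μ := by
        rw [lintegral_const_mul _ hgp.lintegral_prod_right,
          lintegral_lintegral_swap hgp.aemeasurable]
    _ ≤ μ univ ^ (p - 1) * ∫⁻ _, B ∂μ := mul_le_mul_right (lintegral_mono_ae hB) _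
    _ = B * μ univ ^ p := by
        rw [lintegral_const, mul_left_comm]
        conv_rhs => rw [← sub_add_cancel p 1, ENNReal.rpow_add_of_nonneg _ _ (sub_nonneg.mpr hp)
          zero_le_one, ENNReal.rpow_one]

end Holder

section Translation

variable {E : Type*} [NormedAddCommGroup E] [MeasurableSpace E] [BorelSpace E]

lemma setLIntegral_ball_comp_sub_le (μ : Measure E) [μ.IsAddRightInvariant] (f : E → ℝ≥0∞)
    (x₀ y : E) (r : ℝ) :
    ∫⁻ x in ball x₀ r, f (x - y) ∂μ ≤ ∫⁻ z in ball 0 (r + dist x₀ y), f z ∂μ := by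
  have hsub : ball x₀ r ⊆ (· - y) ⁻¹' ball 0 (r + dist x₀ y) := fun x hx => by
    rw [mem_preimage, mem_ball_zero_iff, ← dist_eq_norm]
    linarith [dist_triangle x x₀ y, mem_ball.mp hx]
  calc ∫⁻ x in ball x₀ r, f (x - y) ∂μ
      ≤ ∫⁻ x in (· - y) ⁻¹' ball 0 (r + dist x₀ y), f (x - y) ∂μ := lintegral_mono_set hsub
    _ = ∫⁻ z in ball 0 (r + dist x₀ y), f z ∂μ :=
        (measurePreserving_sub_right μ y).setLIntegral_comp_preimage_emb
          (MeasurableEquiv.subRight y).measurableEmbedding f _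

end Translation

section Dilation

variable {E : Type*} [NormedAddCommGroup E] [NormedSpace ℝ E] [MeasurableSpace E] [BorelSpace E]
  [FiniteDimensional ℝ E] (μ : Measure E) [μ.IsAddHaarMeasure]

lemma setLIntegral_ball_comp_inv_smul (f : E → ℝ≥0∞) {δ : ℝ} (hδ : 0 < δ) (R : ℝ) :
    ∫⁻ x in ball 0 (δ * R), f (δ⁻¹ • x) ∂μ =
      ENNReal.ofReal (δ ^ Module.finrank ℝ E) * ∫⁻ x in ball 0 R, f x ∂μ := by
  have hmap : Measure.map (δ⁻¹ • ·) μ = ENNReal.ofReal (δ ^ Module.finrank ℝ E) • μ := by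
    rw [Measure.map_addHaar_smul μ (inv_ne_zero hδ.ne'), inv_pow, inv_inv,
      abs_of_pos (by positivity)]
  have hpre : (δ⁻¹ • ·) ⁻¹' ball (0 : E) R = ball 0 (δ * R) := by
    ext x
    simp [norm_smul, abs_of_pos hδ, inv_mul_lt_iff₀ hδ]
  rw [← hpre, (MeasurePreserving.mk (measurable_const_smul δ⁻¹) rfl).setLIntegral_comp_preimage_emb
    (Homeomorph.smulOfNeZero δ⁻¹ (inv_ne_zero hδ.ne')).measurableEmbedding, hmap,
    Measure.restrict_smul, lintegral_smul_measure, smul_eq_mul]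

end Dilation

section LogMajorant

lemma logMajorant_mul_le {δ : ℝ} (hδ : 0 < δ) (hδ1 : δ ≤ 1) (r : ℝ) :
    logMajorant (δ * r) ≤ Real.log (2 / δ) / Real.log 2 * logMajorant r := by
  have hlog2 : 0 < Real.log 2 := Real.log_pos one_lt_two
  set m := Real.log δ⁻¹
  have hm : 0 ≤ m := Real.log_nonneg (one_le_inv_iff₀.mpr ⟨hδ, hδ1⟩)
  have hposlog : log⁺ δ⁻¹ = m :=
    Real.posLog_eq_log (by rw [abs_of_pos (inv_pos.mpr hδ)]; exact one_le_inv_iff₀.mpr ⟨hδ, hδ1⟩)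
  have hratio : Real.log (2 / δ) / Real.log 2 = 1 + m / Real.log 2 := by
    rw [div_eq_mul_inv 2 δ, Real.log_mul two_ne_zero (inv_ne_zero hδ.ne'), add_div,
      div_self hlog2.ne']
  have hm_le : m ≤ m / Real.log 2 :=
    le_div_self hm hlog2 (by linarith [Real.log_two_lt_d9])
  have hmul : log⁺ (δ * r)⁻¹ ≤ m + log⁺ r⁻¹ := by
    rw [mul_inv, ← hposlog]; exact Real.posLog_mul
  have hr := Real.posLog_nonneg (x := r⁻¹)
  rw [hratio, logMajorant, logMajorant]
  nlinarith [mul_nonneg (hm.trans hm_le) hr]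

lemma logMajorant_le_mul_rpow_neg {r R ε : ℝ} (hr : 0 < r) (hrR : r ≤ R) (hε : 0 < ε) :
    logMajorant r ≤ (2 * R ^ ε + 2 / ε) * r ^ (-ε) := by
  have hlog : log⁺ r⁻¹ ≤ r ^ (-ε) / ε := by
    refine max_le (by positivity) ?_
    rw [Real.rpow_neg hr.le, ← Real.inv_rpow hr.le]
    exact Real.log_le_rpow_div (inv_nonneg.mpr hr.le) hε
  have hone : 1 ≤ R ^ ε * r ^ (-ε) := by
    rw [Real.rpow_neg hr.le, ← div_eq_mul_inv, one_le_div (by positivity)]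
    exact Real.rpow_le_rpow hr.le hrR hε.le
  rw [logMajorant]
  calc 2 + 2 * log⁺ r⁻¹ ≤ 2 * (R ^ ε * r ^ (-ε)) + 2 * (r ^ (-ε) / ε) := by gcongr; linarith
    _ = (2 * R ^ ε + 2 / ε) * r ^ (-ε) := by ring

lemma measurable_logMajorant : Measurable logMajorant := by
  unfold logMajorant; fun_prop

variable {E : Type*} [NormedAddCommGroup E] [NormedSpace ℝ E] [MeasurableSpace E] [BorelSpace E]
  [FiniteDimensional ℝ E] (μ : Measure E) [μ.IsAddHaarMeasure]

lemma integrableOn_ball_logMajorant_norm_rpow [Nontrivial E] {p : ℝ} (hp : 0 < p) (R : ℝ) :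
    IntegrableOn (fun x : E => logMajorant ‖x‖ ^ p) (ball 0 R) μ := by
  set ε := (2 * p)⁻¹
  have hε : 0 < ε := by positivity
  have hd : 1 ≤ Module.finrank ℝ E := Module.finrank_pos
  have hd' : (1 : ℝ) ≤ Module.finrank ℝ E := by exact_mod_cast hd
  have hmeas : Measurable fun x : E => logMajorant ‖x‖ ^ p :=
    (measurable_logMajorant.comp measurable_norm).pow_const p
  refine integrableOn_ball_of_norm_le_rpow (α := 1 / 2) (C := (2 * R ^ ε + 2 / ε) ^ p) hd
    (by linarith) ?_ hmeas.aestronglyMeasurable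
  have hne : ∀ᵐ x ∂μ.restrict (ball (0 : E) R), x ≠ 0 :=
    ae_restrict_of_ae (compl_mem_ae_iff.mpr (measure_singleton 0))
  filter_upwards [hne, ae_restrict_mem measurableSet_ball] with x hx0 hxR
  have hx : 0 < ‖x‖ := norm_pos_iff.mpr hx0
  have hxR : ‖x‖ < R := mem_ball_zero_iff.mp hxR
  have hR : 0 < R := hx.trans hxR
  rw [Real.norm_of_nonneg (Real.rpow_nonneg (logMajorant_nonneg _) p)]
  calc logMajorant ‖x‖ ^ p ≤ ((2 * R ^ ε + 2 / ε) * ‖x‖ ^ (-ε)) ^ p := by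
        gcongr
        · exact logMajorant_nonneg _
        · exact logMajorant_le_mul_rpow_neg hx hxR.le hε
    _ = (2 * R ^ ε + 2 / ε) ^ p * ‖x‖ ^ (-(1 / 2) : ℝ) := by
        rw [Real.mul_rpow (by positivity) (by positivity), ← Real.rpow_mul hx.le]
        congr 2
        simp only [ε]
        field_simp

lemma setLIntegral_ball_logMajorant_norm_rpow_le {δ : ℝ} (hδ : 0 < δ) (hδ1 : δ ≤ 1) {p : ℝ}
    (hp : 0 ≤ p) (R : ℝ) :
    ∫⁻ z in ball 0 (δ * R), ENNReal.ofReal (logMajorant ‖z‖ ^ p) ∂μ ≤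
      ENNReal.ofReal (δ ^ Module.finrank ℝ E * (Real.log (2 / δ) / Real.log 2) ^ p) *
        ∫⁻ w in ball 0 R, ENNReal.ofReal (logMajorant ‖w‖ ^ p) ∂μ := by
  set l := Real.log (2 / δ) / Real.log 2
  have hl : 0 ≤ l := div_nonneg (Real.log_nonneg (by rw [le_div_iff₀ hδ]; linarith))
    (Real.log_nonneg one_le_two)
  have hpointwise (z : E) : ENNReal.ofReal (logMajorant ‖z‖ ^ p) ≤
      ENNReal.ofReal (l ^ p) * ENNReal.ofReal (logMajorant ‖δ⁻¹ • z‖ ^ p) := by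
    rw [← ENNReal.ofReal_mul (by positivity), ← Real.mul_rpow hl (logMajorant_nonneg _)]
    refine ENNReal.ofReal_le_ofReal (Real.rpow_le_rpow (logMajorant_nonneg _) ?_ hp)
    have hz : ‖z‖ = δ * ‖δ⁻¹ • z‖ := by
      rw [norm_smul, Real.norm_of_nonneg (inv_nonneg.mpr hδ.le), mul_inv_cancel_left₀ hδ.ne']
    rw [hz]
    exact logMajorant_mul_le hδ hδ1 _
  calc ∫⁻ z in ball 0 (δ * R), ENNReal.ofReal (logMajorant ‖z‖ ^ p) ∂μ
      ≤ ∫⁻ z in ball 0 (δ * R), ENNReal.ofReal (l ^ p) *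
          ENNReal.ofReal (logMajorant ‖δ⁻¹ • z‖ ^ p) ∂μ := lintegral_mono hpointwise
    _ = ENNReal.ofReal (l ^ p) * (ENNReal.ofReal (δ ^ Module.finrank ℝ E) *
          ∫⁻ w in ball 0 R, ENNReal.ofReal (logMajorant ‖w‖ ^ p) ∂μ) := by
        rw [lintegral_const_mul' _ _ ENNReal.ofReal_ne_top,
          setLIntegral_ball_comp_inv_smul μ (fun w => ENNReal.ofReal (logMajorant ‖w‖ ^ p)) hδ R]
    _ = _ := by rw [ENNReal.ofReal_mul (by positivity)]; ring

end LogMajorant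

lemma setLIntegral_ball_besselKernel_rpow_le {p : ℝ} (hp : 0 ≤ p) {δ : ℝ} (hδ : 0 < δ)
    (hδ1 : δ ≤ 1) {x₀ y : Eu 2} (hy : dist y x₀ < δ) :
    ∫⁻ x in ball x₀ (2 * δ), ENNReal.ofReal (besselKernel 2 2 (x - y)) ^ p ≤
      ENNReal.ofReal (δ ^ 2 * Real.log (2 / δ) ^ p) * (ENNReal.ofReal (Real.log 2 ^ p)⁻¹ *
        ∫⁻ w in ball (0 : Eu 2) 3, ENNReal.ofReal (logMajorant ‖w‖ ^ p)) := by
  have hne : ∀ᵐ x ∂volume.restrict (ball x₀ (2 * δ)), x ≠ y :=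
    ae_restrict_of_ae (compl_mem_ae_iff.mpr (measure_singleton y))
  have hL : 0 ≤ Real.log (2 / δ) := Real.log_nonneg (by rw [le_div_iff₀ hδ]; linarith)
  have hscale := setLIntegral_ball_logMajorant_norm_rpow_le (volume : Measure (Eu 2)) hδ hδ1 hp 3
  rw [finrank_euclideanSpace_fin, Real.div_rpow hL (Real.log_nonneg one_le_two), div_eq_mul_inv,
    ← mul_assoc, ENNReal.ofReal_mul (by positivity), mul_assoc] at hscale
  calc ∫⁻ x in ball x₀ (2 * δ), ENNReal.ofReal (besselKernel 2 2 (x - y)) ^ p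
      ≤ ∫⁻ x in ball x₀ (2 * δ), ENNReal.ofReal (logMajorant ‖x - y‖ ^ p) := by
        refine lintegral_mono_ae (hne.mono fun x hx => ?_)
        rw [← ENNReal.ofReal_rpow_of_nonneg (logMajorant_nonneg _) hp]
        exact ENNReal.rpow_le_rpow (ENNReal.ofReal_le_ofReal
          (besselKernel_two_two_le_logMajorant (sub_ne_zero.mpr hx))) hp
    _ ≤ ∫⁻ z in ball 0 (2 * δ + dist x₀ y), ENNReal.ofReal (logMajorant ‖z‖ ^ p) :=
        setLIntegral_ball_comp_sub_le volume (fun z => ENNReal.ofReal (logMajorant ‖z‖ ^ p)) x₀ y _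
    _ ≤ ∫⁻ z in ball 0 (δ * 3), ENNReal.ofReal (logMajorant ‖z‖ ^ p) :=
        lintegral_mono_set (ball_subset_ball (by rw [dist_comm]; linarith))
    _ ≤ _ := hscale

theorem stmt16 (τ : ℝ) (hτ1 : 1 ≤ 2 * τ) :
    ∃ c : ℝ≥0, 0 < c ∧ ∀ δ : ℝ, 0 < δ → δ ≤ 1 → ∀ (x₀ : Eu 2) (e : Set (Eu 2))
      (μ : Measure (Eu 2)), IsCompact e → e ⊆ ball x₀ δ → μ eᶜ = 0 →
      (∫⁻ x in ball x₀ (2 * δ), (besselPot2 μ x) ^ (2 * τ)) ≤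
        (c : ℝ≥0∞) * ENNReal.ofReal (δ ^ 2 * (Real.log (2 / δ)) ^ (2 * τ)) *
          (μ e) ^ (2 * τ) := by
  have hp : 0 < 2 * τ := zero_lt_one.trans_le hτ1
  set K := ENNReal.ofReal (Real.log 2 ^ (2 * τ))⁻¹ *
    ∫⁻ w in ball (0 : Eu 2) 3, ENNReal.ofReal (logMajorant ‖w‖ ^ (2 * τ))
  have hK : K ≠ ⊤ := ENNReal.mul_ne_top ENNReal.ofReal_ne_top
    (integrableOn_ball_logMajorant_norm_rpow volume hp 3).lintegral_lt_top.ne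
  refine ⟨K.toNNReal + 1, by positivity, fun δ hδ hδ1 x₀ e μ _ hsub hμ => ?_⟩
  have hKc : K ≤ ((K.toNNReal + 1 : ℝ≥0) : ℝ≥0∞) := by
    rw [ENNReal.coe_add, ENNReal.coe_toNNReal hK]; exact le_self_add
  rcases eq_or_ne (μ e) ⊤ with htop | hfin
  · rw [htop, ENNReal.top_rpow_of_pos hp, ENNReal.mul_top]
    · exact le_top
    · refine mul_ne_zero (by positivity) (ENNReal.ofReal_pos.mpr ?_).ne'
      have : 0 < Real.log (2 / δ) := Real.log_pos (by rw [lt_div_iff₀ hδ]; linarith)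
      positivity
  have huniv : μ univ = μ e := measure_congr (ae_eq_univ.mpr hμ) |>.symm
  have : IsFiniteMeasure μ := ⟨huniv ▸ hfin.lt_top⟩
  have hbound : ∀ᵐ y ∂μ,
      ∫⁻ x in ball x₀ (2 * δ), ENNReal.ofReal (besselKernel 2 2 (x - y)) ^ (2 * τ) ≤
        ENNReal.ofReal (δ ^ 2 * Real.log (2 / δ) ^ (2 * τ)) * K :=
    (show ∀ᵐ y ∂μ, y ∈ e from mem_ae_iff.mpr hμ).mono fun y hy =>
      setLIntegral_ball_besselKernel_rpow_le hp.le hδ hδ1 (mem_ball.mp (hsub hy))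
  calc ∫⁻ x in ball x₀ (2 * δ), besselPot2 μ x ^ (2 * τ)
      ≤ ENNReal.ofReal (δ ^ 2 * Real.log (2 / δ) ^ (2 * τ)) * K * μ univ ^ (2 * τ) :=
        lintegral_rpow_lintegral_le ((measurable_besselKernel 2 2).comp
          (measurable_fst.sub measurable_snd)).ennreal_ofReal hτ1 hbound
    _ ≤ _ := by rw [huniv, mul_comm _ K]; gcongr
end
end
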